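/- Let (K², χ) be integers with χ ≥ 1, K² ≥ 1, 2χ - 5 ≤ K² ≤ 4χ - 6, and let (α, β, γ, e) be chosen according to the residue of K² mod 4 as in the paper (e.g. α = 0, β = K² - 2χ + 6, γ = 2χ - 2 - K²/2, e = 0 when K² ≡ 0 mod 4; the analogous choices in the other cases). Then on the Hirzebruch surface 𝔽_e with Δ₀² = -e, Δ₀·F = 1, F² = 0, the intersection numbers D₁·D₂ = K² - 2χ + 6, D₁·D₃ = 3α + γ - 3e, and D₂·D₃ = D₁·D₃ + 3(β - α) are all strictly positive, where D₁ ≡ Δ₀ + αF, D₂ ≡ Δ₀ + βF, D₃ ≡ 3Δ₀ + γF. -/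
import Mathlib


/-- Intersection number on the Hirzebruch surface 𝔽_e of the divisor classes
aΔ₀ + bF and a'Δ₀ + b'F (with Δ₀² = -e, Δ₀·F = 1, F² = 0), represented as
pairs (a, b). -/
def interF (e : ℤ) (p q : ℤ × ℤ) : ℤ :=
  -e * p.1 * q.1 + p.1 * q.2 + p.2 * q.1

/-- positivity of the intersection numbers D₁·D₂, D₁·D₃, D₂·D₃
on 𝔽_e, where D₁ ≡ Δ₀ + αF, D₂ ≡ Δ₀ + βF, D₃ ≡ 3Δ₀ + γF and (α, β, γ, e) is
chosen according to the residue of K² mod 4 as in the paper. -/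
theorem stmt3 (K χ : ℤ)
    (hχ : 1 ≤ χ) (hK : 1 ≤ K)
    (h3 : 2 * χ - 5 ≤ K) (h4 : K ≤ 4 * χ - 6)
    (α β γ e : ℤ)
    (hcase :
      (K % 4 = 0 ∧ α = 0 ∧ β = K - 2 * χ + 6 ∧
        (γ : ℚ) = 2 * χ - 2 - K / 2 ∧ e = 0) ∨
      (K % 4 = 2 ∧ α = 1 ∧ β = K - 2 * χ + 5 ∧
        (γ : ℚ) = 2 * χ - 2 - K / 2 ∧ e = 0) ∨
      (K % 4 = 3 ∧ α = 0 ∧ β = K - 2 * χ + 7 ∧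
        (γ : ℚ) = 2 * χ - 1 / 2 - K / 2 ∧ e = 1) ∨
      (K % 4 = 1 ∧ α = 1 ∧ β = K - 2 * χ + 6 ∧
        (γ : ℚ) = 2 * χ - 1 / 2 - K / 2 ∧ e = 1)) :
    interF e (1, α) (1, β) = K - 2 * χ + 6 ∧ 0 < interF e (1, α) (1, β) ∧
    interF e (1, α) (3, γ) = 3 * α + γ - 3 * e ∧ 0 < interF e (1, α) (3, γ) ∧
    interF e (1, β) (3, γ) = interF e (1, α) (3, γ) + 3 * (β - α) ∧
      0 < interF e (1, β) (3, γ) := by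
  obtain ⟨h0, hα, hβ, hγ, he⟩ | ⟨h0, hα, hβ, hγ, he⟩ | ⟨h0, hα, hβ, hγ, he⟩ |
    ⟨h0, hα, hβ, hγ, he⟩ := hcase <;>
  subst hα hβ he <;>
  [ (have hg : 2 * γ = 4 * χ - 4 - K := by
      have h : ((2 * γ : ℤ) : ℚ) = ((4 * χ - 4 - K : ℤ) : ℚ) := by push_cast; rw [hγ]; ring
      exact_mod_cast h);
    (have hg : 2 * γ = 4 * χ - 4 - K := by
      have h : ((2 * γ : ℤ) : ℚ) = ((4 * χ - 4 - K : ℤ) : ℚ) := by push_cast; rw [hγ]; ring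
      exact_mod_cast h);
    (have hg : 2 * γ = 4 * χ - 1 - K := by
      have h : ((2 * γ : ℤ) : ℚ) = ((4 * χ - 1 - K : ℤ) : ℚ) := by push_cast; rw [hγ]; ring
      exact_mod_cast h);
    (have hg : 2 * γ = 4 * χ - 1 - K := by
      have h : ((2 * γ : ℤ) : ℚ) = ((4 * χ - 1 - K : ℤ) : ℚ) := by push_cast; rw [hγ]; ring
      exact_mod_cast h)] <;>
  simp only [interF] <;>
  refine ⟨by ring, by omega, by ring, by omega, by ring, by omega⟩
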